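/- Let a < b be real numbers. For each integer N ≥ 2 set Δs = (b − a)/(N − 1) and s_i = a + (i − 1)Δs for i = 1, …, N. Then for every x ∈ ℝ with x ≠ a and x ≠ b, lim_{N→∞} Δs Σ_{i=1}^{N} erf((x − s_i)/(√2 Δs)) = |x − a| − |x − b|, where erf(x) = (2/√π) ∫₀ˣ exp(−t²) dt. -/
import Mathlib


/-- The error function `erf x = (2/√π) ∫₀ˣ exp(−t²) dt`. -/
noncomputable def erf (x : ℝ) : ℝ :=
  (2 / Real.sqrt Real.pi) * ∫ t in (0 : ℝ)..x, Real.exp (-t ^ 2)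

section ErfAux

open Real Filter Finset MeasureTheory Set
lemma gauss_int : Integrable (fun t : ℝ => Real.exp (-t ^ 2)) := by
  have := integrable_exp_neg_mul_sq (b := 1) one_pos
  simpa using this

lemma gauss_Ioi : ∫ t in Set.Ioi (0:ℝ), Real.exp (-t ^ 2) = Real.sqrt Real.pi / 2 := by
  have := integral_gaussian_Ioi 1
  simpa using this

lemma sqrtpi_pos : 0 < Real.sqrt Real.pi := Real.sqrt_pos.2 Real.pi_pos

lemma erf_eq_Ioc {u : ℝ} (hu : 0 ≤ u) :
    erf u = (2 / Real.sqrt Real.pi) * ∫ t in Set.Ioc 0 u, Real.exp (-t ^ 2) := by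
  rw [erf, intervalIntegral.integral_of_le hu]

lemma erf_nonneg {u : ℝ} (hu : 0 ≤ u) : 0 ≤ erf u := by
  rw [erf_eq_Ioc hu]
  have : 0 ≤ ∫ t in Set.Ioc 0 u, Real.exp (-t ^ 2) :=
    setIntegral_nonneg measurableSet_Ioc (fun t _ => (Real.exp_pos _).le)
  positivity

lemma one_sub_erf {u : ℝ} (hu : 0 ≤ u) :
    1 - erf u = (2 / Real.sqrt Real.pi) * ∫ t in Set.Ioi u, Real.exp (-t ^ 2) := by
  have hsplit : (∫ t in Set.Ioi (0:ℝ), Real.exp (-t ^ 2))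
      = (∫ t in Set.Ioc 0 u, Real.exp (-t ^ 2)) + ∫ t in Set.Ioi u, Real.exp (-t ^ 2) := by
    rw [← setIntegral_union (Set.Ioc_disjoint_Ioi le_rfl) measurableSet_Ioi
      gauss_int.integrableOn gauss_int.integrableOn, Set.Ioc_union_Ioi_eq_Ioi hu]
  have h2 : (2 / Real.sqrt Real.pi) * (Real.sqrt Real.pi / 2) = 1 := by
    field_simp
  rw [erf_eq_Ioc hu]
  calc 1 - (2 / Real.sqrt Real.pi) * ∫ t in Set.Ioc 0 u, Real.exp (-t ^ 2)
      = (2 / Real.sqrt Real.pi) * ((∫ t in Set.Ioi (0:ℝ), Real.exp (-t ^ 2))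
          - ∫ t in Set.Ioc 0 u, Real.exp (-t ^ 2)) := by rw [gauss_Ioi, mul_sub, h2]
    _ = (2 / Real.sqrt Real.pi) * ∫ t in Set.Ioi u, Real.exp (-t ^ 2) := by rw [hsplit]; ring

lemma erf_le_one {u : ℝ} (hu : 0 ≤ u) : erf u ≤ 1 := by
  have h := one_sub_erf hu
  have : 0 ≤ ∫ t in Set.Ioi u, Real.exp (-t ^ 2) :=
    setIntegral_nonneg measurableSet_Ioi (fun t _ => (Real.exp_pos _).le)
  have h0 : 0 ≤ (2 / Real.sqrt Real.pi) * ∫ t in Set.Ioi u, Real.exp (-t ^ 2) :=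
    mul_nonneg (by positivity) this
  linarith

lemma one_sub_erf_le {u : ℝ} (hu : 0 ≤ u) : 1 - erf u ≤ 3 * Real.exp (-u) := by
  rcases le_or_gt 1 u with h1 | h1
  · rw [one_sub_erf hu]
    have hint : (∫ t in Set.Ioi u, Real.exp (-t ^ 2)) ≤ ∫ t in Set.Ioi u, Real.exp (-t) := by
      apply setIntegral_mono_on gauss_int.integrableOn
        (by simpa using (exp_neg_integrableOn_Ioi u (b:=1) one_pos)) measurableSet_Ioi
      intro t ht
      have ht1 : 1 ≤ t := h1.trans (le_of_lt ht)
      have : t ≤ t ^ 2 := by nlinarith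
      exact Real.exp_le_exp.2 (by linarith)
    rw [integral_exp_neg_Ioi] at hint
    have hsp : 1 ≤ Real.sqrt Real.pi := by
      rw [show (1:ℝ) = Real.sqrt 1 by simp]
      exact Real.sqrt_le_sqrt (by linarith [Real.pi_gt_three])
    have h2 : 2 / Real.sqrt Real.pi ≤ 2 := by
      rw [div_le_iff₀ sqrtpi_pos]; nlinarith
    calc (2 / Real.sqrt Real.pi) * ∫ t in Set.Ioi u, Real.exp (-t ^ 2)
        ≤ 2 * Real.exp (-u) := by
          apply mul_le_mul h2 hint (setIntegral_nonneg measurableSet_Ioi (fun t _ => (Real.exp_pos _).le)) (by norm_num)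
      _ ≤ 3 * Real.exp (-u) := by nlinarith [Real.exp_pos (-u)]
  · have he : 1 ≤ Real.exp 1 * Real.exp (-u) := by
      rw [← Real.exp_add]
      have : (0:ℝ) ≤ 1 + -u := by linarith
      calc (1:ℝ) = Real.exp 0 := by simp
        _ ≤ Real.exp (1 + -u) := Real.exp_le_exp.2 (by linarith)
    have h3 : Real.exp 1 ≤ 3 := by nlinarith [Real.exp_one_lt_d9]
    have := erf_nonneg hu
    nlinarith [Real.exp_pos (-u)]

lemma erf_neg (u : ℝ) : erf (-u) = - erf u := by
  rw [erf, erf]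
  have h := intervalIntegral.integral_comp_neg (a := 0) (b := u) (fun t => Real.exp (-t ^ 2))
  simp only [neg_neg, neg_zero, neg_sq] at h
  have h2 : (∫ t in (0:ℝ)..(-u), Real.exp (-t ^ 2)) = - ∫ t in (-u)..(0:ℝ), Real.exp (-t ^ 2) :=
    (intervalIntegral.integral_symm _ _)
  rw [h2, ← h]; ring

lemma abs_erf_sub_sign (v : ℝ) : |erf v - Real.sign v| ≤ 3 * Real.exp (-|v|) := by
  rcases lt_trichotomy v 0 with hv | hv | hv
  · rw [Real.sign_of_neg hv, abs_of_neg hv]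
    have h1 := one_sub_erf_le (u := -v) (by linarith)
    have h2 := erf_le_one (u := -v) (by linarith)
    rw [erf_neg] at h1 h2
    rw [abs_le]; constructor <;> nlinarith [Real.exp_pos (-(-v))]
  · subst hv
    have : erf 0 = 0 := by simp [erf]
    rw [this, Real.sign_zero]
    simp [Real.exp_zero]
  · rw [Real.sign_of_pos hv, abs_of_pos hv]
    have h1 := one_sub_erf_le hv.le
    have h2 := erf_le_one hv.le
    rw [abs_le]; constructor <;> nlinarith [Real.exp_pos (-v)]

lemma geom_tail {r : ℝ} (hr0 : 0 ≤ r) (hr1 : r < 1) (m : ℕ) :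
    ∑ j ∈ Finset.range m, r ^ j ≤ 1 / (1 - r) := by
  rw [geom_sum_eq hr1.ne]
  have h1 : (r ^ m - 1) / (r - 1) = (1 - r ^ m) / (1 - r) := by
    rw [← neg_div_neg_eq]; ring_nf
  rw [h1]
  have hp : (0:ℝ) < 1 - r := by linarith
  have hm : (0:ℝ) ≤ r ^ m := pow_nonneg hr0 m
  gcongr <;> linarith

lemma sum_exp_abs_bound (d : ℝ) (hd : 0 < d) (c : ℝ) (N : ℕ) :
    ∑ i ∈ Finset.range N, Real.exp (-|c - (i : ℝ) * d|) ≤ 2 / (1 - Real.exp (-d)) := by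
  set r := Real.exp (-d) with hr
  have hr0 : 0 < r := Real.exp_pos _
  have hr1 : r < 1 := Real.exp_lt_one_iff.2 (by linarith)
  set k := ⌈c / d⌉₊ with hk
  have hdc : d * (c / d) = c := mul_div_cancel₀ c hd.ne' ▸ by field_simp
  have key : ∀ i ∈ Finset.range N,
      Real.exp (-|c - (i : ℝ) * d|) ≤ (if i < k then r ^ (k - 1 - i) else r ^ (i - k)) := by
    intro i _
    by_cases hik : i < k
    · simp only [hik, if_true]
      have hk1 : 1 ≤ k := by omega
      have hcd : 0 < c / d := by
        by_contra h
        push_neg at h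
        have : k = 0 := by rw [hk]; exact Nat.ceil_eq_zero.2 h
        omega
      have h1 : ((k:ℝ) - 1) < c / d := by
        have := Nat.ceil_lt_add_one hcd.le
        rw [← hk] at this
        linarith
      have hi : (i:ℝ) ≤ (k:ℝ) - 1 := by
        have : i ≤ k - 1 := by omega
        have := Nat.cast_le (α := ℝ) |>.2 this
        rw [Nat.cast_sub hk1] at this
        simpa using this
      have hcast : ((k - 1 - i : ℕ):ℝ) = (k:ℝ) - 1 - i := by
        rw [Nat.cast_sub (by omega), Nat.cast_sub hk1]
        simp
      have hdk : d * ((k:ℝ) - 1) ≤ c := by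
        have := mul_le_mul_of_nonneg_left h1.le hd.le
        rw [hdc] at this
        exact this
      have habs : d * ((k - 1 - i : ℕ) : ℝ) ≤ |c - (i:ℝ) * d| := by
        rw [hcast]
        have h2 : d * ((k:ℝ) - 1 - i) ≤ c - i * d := by nlinarith
        have h3 : (0:ℝ) ≤ d * ((k:ℝ) - 1 - i) := mul_nonneg hd.le (by linarith)
        rw [abs_of_nonneg (by linarith)]
        exact h2
      calc Real.exp (-|c - (i:ℝ) * d|) ≤ Real.exp (-(d * ((k - 1 - i : ℕ) : ℝ))) :=
            Real.exp_le_exp.2 (neg_le_neg habs)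
        _ = r ^ (k - 1 - i) := by
            rw [hr, ← Real.exp_nat_mul]
            ring_nf
    · simp only [hik, if_false]
      push_neg at hik
      have hki : (c / d) ≤ (k:ℝ) := Nat.le_ceil _
      have hi : (k:ℝ) ≤ (i:ℝ) := by exact_mod_cast hik
      have hcast : ((i - k : ℕ):ℝ) = (i:ℝ) - k := by rw [Nat.cast_sub hik]
      have hdk : c ≤ d * (k:ℝ) := by
        have := mul_le_mul_of_nonneg_left hki hd.le
        rw [hdc] at this
        exact this
      have habs : d * ((i - k : ℕ) : ℝ) ≤ |c - (i:ℝ) * d| := by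
        rw [hcast]
        have h2 : d * ((i:ℝ) - k) ≤ (i:ℝ) * d - c := by nlinarith
        have h3 : (0:ℝ) ≤ d * ((i:ℝ) - k) := mul_nonneg hd.le (by linarith)
        rw [abs_sub_comm, abs_of_nonneg (by linarith)]
        exact h2
      calc Real.exp (-|c - (i:ℝ) * d|) ≤ Real.exp (-(d * ((i - k : ℕ) : ℝ))) :=
            Real.exp_le_exp.2 (neg_le_neg habs)
        _ = r ^ (i - k) := by
            rw [hr, ← Real.exp_nat_mul]
            ring_nf
  have hsplit := Finset.sum_filter_add_sum_filter_not (Finset.range N) (· < k)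
    (fun i => (if i < k then r ^ (k - 1 - i) else r ^ (i - k)))
  calc ∑ i ∈ Finset.range N, Real.exp (-|c - (i : ℝ) * d|)
      ≤ ∑ i ∈ Finset.range N, (if i < k then r ^ (k - 1 - i) else r ^ (i - k)) :=
        Finset.sum_le_sum key
    _ = (∑ i ∈ (Finset.range N).filter (· < k), r ^ (k - 1 - i))
        + ∑ i ∈ (Finset.range N).filter (fun i => ¬ i < k), r ^ (i - k) := by
        rw [← hsplit]
        congr 1
        · exact Finset.sum_congr rfl (fun i hi => by simp at hi; simp [hi.2])
        · exact Finset.sum_congr rfl (fun i hi => by simp at hi; simp [hi.2])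
    _ ≤ (∑ i ∈ Finset.range k, r ^ (k - 1 - i)) + ∑ j ∈ Finset.range (N - k), r ^ j := by
        gcongr ?_ + ?_
        · apply Finset.sum_le_sum_of_subset_of_nonneg
          · intro i hi
            simp at hi ⊢
            omega
          · intro i _ _
            positivity
        · have : (Finset.range N).filter (fun i => ¬ i < k) = Finset.Ico k N := by
            ext i
            simp
            omega
          rw [this, Finset.sum_Ico_eq_sum_range]
          apply le_of_eq
          exact Finset.sum_congr rfl (fun j _ => by congr 1; omega)
    _ = (∑ j ∈ Finset.range k, r ^ j) + ∑ j ∈ Finset.range (N - k), r ^ j := by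
        rw [Finset.sum_range_reflect (fun j => r ^ j) k]
    _ ≤ 1 / (1 - r) + 1 / (1 - r) := by
        gcongr ?_ + ?_ <;> exact geom_tail hr0.le hr1 _
    _ = 2 / (1 - r) := by ring

lemma sign_div_pos {y t : ℝ} (ht : 0 < t) : Real.sign (y / t) = Real.sign y := by
  rcases lt_trichotomy y 0 with h | h | h
  · rw [Real.sign_of_neg h, Real.sign_of_neg (div_neg_of_neg_of_pos h ht)]
  · rw [h]; simp [Real.sign_zero]
  · rw [Real.sign_of_pos h, Real.sign_of_pos (div_pos h ht)]

end ErfAux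

set_option maxHeartbeats 2000000 in
/-- Riemann-sum limit with smoothing parameter coupled to the mesh: for `a < b`, set
`Δs = (b − a)/(N − 1)` and `sᵢ = a + (i − 1)Δs` for `i = 1, …, N` (encoded via
`i ∈ Finset.range N`). Then for every `x ≠ a`, `x ≠ b`,
`lim_{N→∞} Δs Σ_{i=1}^{N} erf((x − sᵢ)/(√2 Δs)) = |x − a| − |x − b|`. -/
theorem riemann_sum_erf_tendsto_abs_sub
    (a b : ℝ) (hab : a < b) (x : ℝ) (hxa : x ≠ a) (hxb : x ≠ b) :
    Filter.Tendsto
      (fun N : ℕ => ((b - a) / ((N : ℝ) - 1)) * ∑ i ∈ Finset.range N,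
        erf ((x - (a + (i : ℝ) * ((b - a) / ((N : ℝ) - 1)))) /
          (Real.sqrt 2 * ((b - a) / ((N : ℝ) - 1)))))
      Filter.atTop
      (nhds (|x - a| - |x - b|)) := by
  open Real Filter Finset in
  have hba : (0:ℝ) < b - a := sub_pos.2 hab
  have hs2 : (0:ℝ) < Real.sqrt 2 := by positivity
  set Δ : ℕ → ℝ := fun N => (b - a) / ((N : ℝ) - 1) with hΔdef
  have hΔpos : ∀ N : ℕ, 2 ≤ N → 0 < Δ N := by
    intro N hN
    have : (2:ℝ) ≤ (N:ℝ) := by exact_mod_cast hN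
    exact div_pos hba (by linarith)
  have hΔ0 : Filter.Tendsto Δ Filter.atTop (nhds 0) := by
    apply Filter.Tendsto.div_atTop tendsto_const_nhds
    have h := tendsto_natCast_atTop_atTop (R := ℝ)
    exact (tendsto_atTop_add_const_right _ (-1) h).congr (fun N => by ring)
  have hΔN1 : ∀ N : ℕ, 2 ≤ N → Δ N * ((N:ℝ) - 1) = b - a := by
    intro N hN
    have hN2 : (2:ℝ) ≤ (N:ℝ) := by exact_mod_cast hN
    have hne : (N:ℝ) - 1 ≠ 0 := by linarith
    rw [hΔdef]
    simp only []
    rw [div_mul_eq_mul_div, mul_div_assoc, div_self hne, mul_one]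
  set G : ℕ → ℝ := fun N => Δ N *
      (((((Finset.range N).filter
          (fun i : ℕ => 0 < x - (a + (i:ℝ) * Δ N))).card : ℝ))
      - ((((Finset.range N).filter
          (fun i : ℕ => x - (a + (i:ℝ) * Δ N) < 0)).card : ℝ))) with hGdef
  have hG : Filter.Tendsto G Filter.atTop (nhds (|x - a| - |x - b|)) := by
    rcases hxa.lt_or_gt with hx | hax
    · -- x < a
      have habs : |x - a| - |x - b| = -(b - a) := by
        rw [abs_of_neg (by linarith), abs_of_neg (by linarith)]; ring
      rw [habs]
      have h1 : Filter.Tendsto (fun N : ℕ => -((b - a) + Δ N)) Filter.atTop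
          (nhds (-(b - a))) := by
        have h2 := (tendsto_const_nhds (x := b - a)
          (f := Filter.atTop (α := ℕ))).add hΔ0
        simpa using h2.neg
      apply h1.congr'
      filter_upwards [Filter.eventually_ge_atTop 2] with N hN
      have hΔp := hΔpos N hN
      have hN2 : (2:ℝ) ≤ (N:ℝ) := by exact_mod_cast hN
      have hP : (Finset.range N).filter
          (fun i : ℕ => 0 < x - (a + (i:ℝ) * Δ N)) = ∅ := by
        apply Finset.filter_false_of_mem
        intro i _
        have : (0:ℝ) ≤ (i:ℝ) * Δ N := mul_nonneg (Nat.cast_nonneg i) hΔp.le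
        push_neg
        linarith
      have hQ : (Finset.range N).filter
          (fun i : ℕ => x - (a + (i:ℝ) * Δ N) < 0) = Finset.range N := by
        apply Finset.filter_true_of_mem
        intro i _
        have : (0:ℝ) ≤ (i:ℝ) * Δ N := mul_nonneg (Nat.cast_nonneg i) hΔp.le
        linarith
      rw [hGdef]
      simp only [hP, hQ, Finset.card_empty, Finset.card_range, Nat.cast_zero]
      have h3 := hΔN1 N hN
      nlinarith
    rcases hxb.lt_or_gt with hxb' | hbx
    · -- a < x < b
      have habs : |x - a| - |x - b| = (x - a) - (b - x) := by
        rw [abs_of_pos (by linarith), abs_of_neg (by linarith)]; ring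
      rw [habs]
      have hcardP : ∀ᶠ N : ℕ in Filter.atTop,
          (((Finset.range N).filter
            (fun i : ℕ => 0 < x - (a + (i:ℝ) * Δ N))).card : ℝ)
            = (⌈(x - a) / Δ N⌉₊ : ℝ) := by
        filter_upwards [Filter.eventually_ge_atTop 2] with N hN
        have hΔp := hΔpos N hN
        have hN2 : (2:ℝ) ≤ (N:ℝ) := by exact_mod_cast hN
        set c := (x - a) / Δ N with hc
        have hcN : c < (N:ℝ) - 1 := by
          rw [hc, div_lt_iff₀ hΔp]
          nlinarith [hΔN1 N hN]
        have hceil : ⌈c⌉₊ ≤ N := by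
          rw [Nat.ceil_le]
          linarith
        have hpred : (Finset.range N).filter
            (fun i : ℕ => 0 < x - (a + (i:ℝ) * Δ N)) = Finset.range ⌈c⌉₊ := by
          ext i
          simp only [Finset.mem_filter, Finset.mem_range]
          constructor
          · rintro ⟨_, h⟩
            apply Nat.lt_ceil.2
            rw [hc, lt_div_iff₀ hΔp]
            linarith
          · intro h
            have h2 : (i:ℝ) < c := Nat.lt_ceil.1 h
            rw [hc, lt_div_iff₀ hΔp] at h2
            exact ⟨lt_of_lt_of_le h hceil, by linarith⟩
        rw [hpred, Finset.card_range]
      have hcardQ : ∀ᶠ N : ℕ in Filter.atTop,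
          (((Finset.range N).filter
            (fun i : ℕ => x - (a + (i:ℝ) * Δ N) < 0)).card : ℝ)
            = ((N:ℝ) - 1) - (⌊(x - a) / Δ N⌋₊ : ℝ) := by
        filter_upwards [Filter.eventually_ge_atTop 2] with N hN
        have hΔp := hΔpos N hN
        have hN2 : (2:ℝ) ≤ (N:ℝ) := by exact_mod_cast hN
        set c := (x - a) / Δ N with hc
        have hc0 : (0:ℝ) ≤ c := div_nonneg (by linarith) hΔp.le
        have hcN : c < (N:ℝ) - 1 := by
          rw [hc, div_lt_iff₀ hΔp]
          nlinarith [hΔN1 N hN]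
        have hfloor : ⌊c⌋₊ + 1 ≤ N := by
          have h1 : ⌊c⌋₊ < N := by
            rw [Nat.floor_lt hc0]
            linarith
          omega
        have hpred : (Finset.range N).filter
            (fun i : ℕ => x - (a + (i:ℝ) * Δ N) < 0)
            = Finset.Ico (⌊c⌋₊ + 1) N := by
          ext i
          simp only [Finset.mem_filter, Finset.mem_range, Finset.mem_Ico]
          constructor
          · rintro ⟨hiN, h⟩
            refine ⟨?_, hiN⟩
            have h2 : c < (i:ℝ) := by
              rw [hc, div_lt_iff₀ hΔp]
              linarith
            have := (Nat.floor_lt hc0).2 h2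
            omega
          · rintro ⟨h1, h2⟩
            refine ⟨h2, ?_⟩
            have h3 : c < (i:ℝ) := (Nat.floor_lt hc0).1 (by omega)
            rw [hc, div_lt_iff₀ hΔp] at h3
            linarith
        rw [hpred, Nat.card_Ico]
        have : ((N - (⌊c⌋₊ + 1) : ℕ) : ℝ) = (N:ℝ) - (⌊c⌋₊:ℝ) - 1 := by
          push_cast [Nat.cast_sub hfloor]
          ring
        rw [this]; ring
      have hP : Filter.Tendsto (fun N : ℕ => Δ N *
          (((Finset.range N).filter
            (fun i : ℕ => 0 < x - (a + (i:ℝ) * Δ N))).card : ℝ))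
          Filter.atTop (nhds (x - a)) := by
        apply tendsto_of_tendsto_of_tendsto_of_le_of_le' (g := fun _ => x - a)
          (h := fun N => (x - a) + Δ N) tendsto_const_nhds
        · simpa using (tendsto_const_nhds (x := x - a)
            (f := Filter.atTop (α := ℕ))).add hΔ0
        · filter_upwards [Filter.eventually_ge_atTop 2, hcardP] with N hN hc
          have hΔp := hΔpos N hN
          rw [hc]
          have h1 : (x - a) / Δ N ≤ (⌈(x - a) / Δ N⌉₊ : ℝ) := Nat.le_ceil _
          have h2 : Δ N * ((x - a) / Δ N) = x - a := by field_simp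
          nlinarith
        · filter_upwards [Filter.eventually_ge_atTop 2, hcardP] with N hN hc
          have hΔp := hΔpos N hN
          rw [hc]
          have hc0 : (0:ℝ) ≤ (x - a) / Δ N := div_nonneg (by linarith) hΔp.le
          have h1 : (⌈(x - a) / Δ N⌉₊ : ℝ) < (x - a) / Δ N + 1 :=
            Nat.ceil_lt_add_one hc0
          have h2 : Δ N * ((x - a) / Δ N) = x - a := by field_simp
          nlinarith
      have hQ : Filter.Tendsto (fun N : ℕ => Δ N *
          (((Finset.range N).filter
            (fun i : ℕ => x - (a + (i:ℝ) * Δ N) < 0)).card : ℝ))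
          Filter.atTop (nhds (b - x)) := by
        apply tendsto_of_tendsto_of_tendsto_of_le_of_le' (g := fun _ => b - x)
          (h := fun N => (b - x) + Δ N) tendsto_const_nhds
        · simpa using (tendsto_const_nhds (x := b - x)
            (f := Filter.atTop (α := ℕ))).add hΔ0
        · filter_upwards [Filter.eventually_ge_atTop 2, hcardQ] with N hN hc
          have hΔp := hΔpos N hN
          rw [hc]
          have hc0 : (0:ℝ) ≤ (x - a) / Δ N := div_nonneg (by linarith) hΔp.le
          have h1 : (⌊(x - a) / Δ N⌋₊ : ℝ) ≤ (x - a) / Δ N := Nat.floor_le hc0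
          have h2 : Δ N * ((x - a) / Δ N) = x - a := by field_simp
          nlinarith [hΔN1 N hN]
        · filter_upwards [Filter.eventually_ge_atTop 2, hcardQ] with N hN hc
          have hΔp := hΔpos N hN
          rw [hc]
          have hc0 : (0:ℝ) ≤ (x - a) / Δ N := div_nonneg (by linarith) hΔp.le
          have h1 : (x - a) / Δ N < (⌊(x - a) / Δ N⌋₊ : ℝ) + 1 :=
            Nat.lt_floor_add_one _
          have h2 : Δ N * ((x - a) / Δ N) = x - a := by field_simp
          nlinarith [hΔN1 N hN]
      have h := hP.sub hQ
      exact h.congr (fun N => by rw [hGdef]; ring)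
    · -- b < x
      have habs : |x - a| - |x - b| = b - a := by
        rw [abs_of_pos (by linarith), abs_of_pos (by linarith)]; ring
      rw [habs]
      have h1 : Filter.Tendsto (fun N : ℕ => (b - a) + Δ N) Filter.atTop
          (nhds (b - a)) := by
        simpa using (tendsto_const_nhds (x := b - a)
          (f := Filter.atTop (α := ℕ))).add hΔ0
      apply h1.congr'
      filter_upwards [Filter.eventually_ge_atTop 2] with N hN
      have hΔp := hΔpos N hN
      have hN2 : (2:ℝ) ≤ (N:ℝ) := by exact_mod_cast hN
      have hsi : ∀ i ∈ Finset.range N, (i:ℝ) * Δ N ≤ b - a := by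
        intro i hi
        have hiN : (i:ℝ) ≤ (N:ℝ) - 1 := by
          have : i ≤ N - 1 := by
            simp only [Finset.mem_range] at hi
            omega
          have h4 : ((N - 1 : ℕ):ℝ) = (N:ℝ) - 1 := by
            push_cast [Nat.cast_sub (by omega : 1 ≤ N)]
            ring
          calc (i:ℝ) ≤ ((N - 1 : ℕ):ℝ) := by exact_mod_cast this
            _ = (N:ℝ) - 1 := h4
        calc (i:ℝ) * Δ N ≤ ((N:ℝ) - 1) * Δ N :=
              mul_le_mul_of_nonneg_right hiN hΔp.le
          _ = b - a := by rw [mul_comm]; exact hΔN1 N hN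
      have hP : (Finset.range N).filter
          (fun i : ℕ => 0 < x - (a + (i:ℝ) * Δ N)) = Finset.range N := by
        apply Finset.filter_true_of_mem
        intro i hi
        have := hsi i hi
        linarith
      have hQ : (Finset.range N).filter
          (fun i : ℕ => x - (a + (i:ℝ) * Δ N) < 0) = ∅ := by
        apply Finset.filter_false_of_mem
        intro i hi
        have := hsi i hi
        push_neg
        linarith
      rw [hGdef]
      simp only [hP, hQ, Finset.card_empty, Finset.card_range, Nat.cast_zero]
      have h3 := hΔN1 N hN
      nlinarith
  have hFG : Filter.Tendsto (fun N : ℕ =>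
      (Δ N * ∑ i ∈ Finset.range N,
        erf ((x - (a + (i : ℝ) * Δ N)) / (Real.sqrt 2 * Δ N))) - G N)
      Filter.atTop (nhds 0) := by
    set C : ℝ := 3 * (2 / (1 - Real.exp (-(Real.sqrt 2)⁻¹))) with hCdef
    apply squeeze_zero_norm' (a := fun N => Δ N * C)
    · filter_upwards [Filter.eventually_ge_atTop 2] with N hN
      have hΔp := hΔpos N hN
      have hsign : ∀ i ∈ Finset.range N, Real.sign (x - (a + (i:ℝ) * Δ N)) =
          (if 0 < x - (a + (i:ℝ) * Δ N) then (1:ℝ) else 0)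
          - (if x - (a + (i:ℝ) * Δ N) < 0 then (1:ℝ) else 0) := by
        intro i _
        rcases lt_trichotomy (x - (a + (i:ℝ) * Δ N)) 0 with h | h | h
        · rw [Real.sign_of_neg h, if_neg h.not_gt, if_pos h]; ring
        · rw [h, Real.sign_zero]; simp
        · rw [Real.sign_of_pos h, if_pos h, if_neg h.not_gt]; ring
      have hcard : ((((Finset.range N).filter
              (fun i : ℕ => 0 < x - (a + (i:ℝ) * Δ N))).card : ℝ))
          - ((((Finset.range N).filter
              (fun i : ℕ => x - (a + (i:ℝ) * Δ N) < 0)).card : ℝ))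
          = ∑ i ∈ Finset.range N, Real.sign (x - (a + (i:ℝ) * Δ N)) := by
        rw [Finset.sum_congr rfl hsign, Finset.sum_sub_distrib,
          Finset.sum_boole, Finset.sum_boole]
      have hexpand : (Δ N * ∑ i ∈ Finset.range N,
            erf ((x - (a + (i : ℝ) * Δ N)) / (Real.sqrt 2 * Δ N))) - G N
          = Δ N * ∑ i ∈ Finset.range N,
            (erf ((x - (a + (i : ℝ) * Δ N)) / (Real.sqrt 2 * Δ N))
              - Real.sign (x - (a + (i:ℝ) * Δ N))) := by
        rw [hGdef]
        simp only []
        rw [hcard, Finset.sum_sub_distrib]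
        ring
      rw [hexpand, Real.norm_eq_abs, abs_mul, abs_of_pos hΔp]
      have hbound : |∑ i ∈ Finset.range N,
          (erf ((x - (a + (i : ℝ) * Δ N)) / (Real.sqrt 2 * Δ N))
            - Real.sign (x - (a + (i:ℝ) * Δ N)))| ≤ C := by
        set c : ℝ := (x - a) / (Real.sqrt 2 * Δ N) with hcdef
        calc |∑ i ∈ Finset.range N,
            (erf ((x - (a + (i : ℝ) * Δ N)) / (Real.sqrt 2 * Δ N))
              - Real.sign (x - (a + (i:ℝ) * Δ N)))|
            ≤ ∑ i ∈ Finset.range N,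
              |erf ((x - (a + (i : ℝ) * Δ N)) / (Real.sqrt 2 * Δ N))
                - Real.sign (x - (a + (i:ℝ) * Δ N))| :=
              Finset.abs_sum_le_sum_abs _ _
          _ ≤ ∑ i ∈ Finset.range N,
              3 * Real.exp (-|c - (i:ℝ) * (Real.sqrt 2)⁻¹|) := by
              apply Finset.sum_le_sum
              intro i _
              have hu : (x - (a + (i : ℝ) * Δ N)) / (Real.sqrt 2 * Δ N)
                  = c - (i:ℝ) * (Real.sqrt 2)⁻¹ := by
                rw [hcdef]
                field_simp
                ring
              have hsg : Real.sign (x - (a + (i:ℝ) * Δ N))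
                  = Real.sign ((x - (a + (i : ℝ) * Δ N)) / (Real.sqrt 2 * Δ N)) :=
                (sign_div_pos (by positivity)).symm
              rw [hsg, hu]
              exact abs_erf_sub_sign _
          _ = 3 * ∑ i ∈ Finset.range N,
              Real.exp (-|c - (i:ℝ) * (Real.sqrt 2)⁻¹|) := by
              rw [Finset.mul_sum]
          _ ≤ C := by
              rw [hCdef]
              have := sum_exp_abs_bound (Real.sqrt 2)⁻¹ (by positivity) c N
              nlinarith
      exact mul_le_mul_of_nonneg_left hbound hΔp.le
    · simpa using hΔ0.mul_const C
  have hsum := hFG.add hG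
  rw [zero_add] at hsum
  exact hsum.congr (fun N => by ring)
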